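/- Mehler's formula: for real x, y and real t with |t| < 1, the sum over n ≥ 0 of t^n * Ψ_n(x) * Ψ_n(y) equals (π(1-t²))^{-1/2} * exp((4xyt - (x²+y²)(1+t²))/(2(1-t²))), where Ψ_n(x) = (2^n n! √π)^{-1/2} H_n(x) e^{-x²/2} and H_n is the n-th Hermite polynomial. -/

import Mathlib

open Filter Topology

/-- The physicists' Hermite polynomial `H_n`, via the Rodrigues formula
`H_n(x) = (-1)^n e^{x²} (d/dx)^n e^{-x²}`. -/
noncomputable def physHermite (n : ℕ) (x : ℝ) : ℝ :=
  (-1) ^ n * Real.exp (x ^ 2) * iteratedDeriv n (fun y => Real.exp (-y ^ 2)) x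

/-- The normalized Hermite function `Ψ_n(x) = (2^n n! √π)^{-1/2} H_n(x) e^{-x²/2}`. -/
noncomputable def hermiteFun (n : ℕ) (x : ℝ) : ℝ :=
  ((2 : ℝ) ^ n * n.factorial * Real.sqrt Real.pi) ^ (-(1 : ℝ) / 2) *
    physHermite n x * Real.exp (-x ^ 2 / 2)

/-!
The proof goes through the integral representation
`H_n(x) = 2^n / √π * ∫ (x + i s)^n e^{-s²} ds`, which holds because both sides satisfy
`H_{n+1} = 2x H_n - 2n H_{n-1}` (for the integral, by one integration by parts, using
`-2s = 2i((x + is) - x)`). Substituting it for both Hermite factors, with `z = x + is` and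
`w = y + iu`, the series becomes `∫∫ Σ_n (2tzw)^n / n! * e^{-s²-u²} = ∫∫ exp(2tzw - s² - u²)`.
Integrating term by term is justified by dominated convergence: `2|t||z||w| ≤ |t|(|z|² + |w|²)`
leaves a Gaussian majorant when `|t| < 1`. The double integral is then two complex Gaussian
integrals.
-/

open Complex MeasureTheory
open scoped Nat

lemma hasDerivAt_exp_neg_sq (x : ℝ) :
    HasDerivAt (fun y : ℝ => Real.exp (-y ^ 2)) (-2 * x * Real.exp (-x ^ 2)) x := by
  simpa [mul_comm, mul_left_comm] using ((hasDerivAt_pow 2 x).neg).exp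

lemma iteratedDeriv_exp_neg_sq_succ (n : ℕ) (x : ℝ) :
    iteratedDeriv (n + 1) (fun y : ℝ => Real.exp (-y ^ 2)) x =
      -2 * (x * iteratedDeriv n (fun y : ℝ => Real.exp (-y ^ 2)) x
        + n * iteratedDeriv (n - 1) (fun y : ℝ => Real.exp (-y ^ 2)) x) := by
  set g : ℝ → ℝ := fun y => Real.exp (-y ^ 2)
  induction n generalizing x with
  | zero =>
    rw [zero_add, iteratedDeriv_one, (hasDerivAt_exp_neg_sq x).deriv]
    simp only [iteratedDeriv_zero, CharP.cast_eq_zero, g]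
    ring
  | succ n ih =>
    have hd (k : ℕ) (y : ℝ) : HasDerivAt (iteratedDeriv k g) (iteratedDeriv (k + 1) g y) y := by
      rw [iteratedDeriv_succ]
      exact ((show ContDiff ℝ ⊤ g by fun_prop).differentiable_iteratedDeriv k
        (WithTop.coe_lt_top _)).differentiableAt.hasDerivAt
    have h := ((((hasDerivAt_id' x).mul (hd n x)).add ((hd (n - 1) x).const_mul (n : ℝ))).const_mul
      (-2 : ℝ)).congr_of_eventuallyEq (Eventually.of_forall ih)
    rw [iteratedDeriv_succ, h.deriv, ih x]
    rcases n with _ | n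
    · simp only [Nat.zero_sub, zero_add, CharP.cast_eq_zero, Nat.cast_one]
      ring
    · simp only [Nat.add_sub_cancel]
      push_cast
      ring

lemma physHermite_zero (x : ℝ) : physHermite 0 x = 1 := by
  simp [physHermite, ← Real.exp_add]

lemma physHermite_succ (n : ℕ) (x : ℝ) :
    physHermite (n + 1) x = 2 * x * physHermite n x - 2 * n * physHermite (n - 1) x := by
  have hsign : (n : ℝ) * (-1) ^ (n - 1) = n * (-1) ^ (n + 1) := by
    rcases n with _ | n
    · simp
    · simp [pow_succ]
  simp only [physHermite, iteratedDeriv_exp_neg_sq_succ]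
  linear_combination (2 * Real.exp (x ^ 2) *
    iteratedDeriv (n - 1) (fun y : ℝ => Real.exp (-y ^ 2)) x) * hsign

lemma sq_norm_add_mul_I (x s : ℝ) : ‖(x : ℂ) + s * I‖ ^ 2 = x ^ 2 + s ^ 2 := by
  rw [← normSq_eq_norm_sq, normSq_add_mul_I]

lemma norm_cexp_neg_sq (s : ℝ) : ‖cexp (-(s : ℂ) ^ 2)‖ = Real.exp (-s ^ 2) := by
  rw [← ofReal_pow, ← ofReal_neg, norm_exp_ofReal]

lemma integrable_pow_mul_cexp_neg_sq (n : ℕ) (x : ℝ) :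
    Integrable (fun s : ℝ => ((x : ℂ) + s * I) ^ n * cexp (-(s : ℂ) ^ 2)) := by
  refine ((integrable_exp_neg_mul_sq (b := 1 / 2) (by norm_num)).const_mul
    (n ! * Real.exp ((1 + x ^ 2) / 2))).mono' (by fun_prop) (ae_of_all _ fun s => ?_)
  have hz := two_mul_le_add_sq 1 ‖(x : ℂ) + s * I‖
  rw [sq_norm_add_mul_I] at hz
  calc ‖((x : ℂ) + s * I) ^ n * cexp (-(s : ℂ) ^ 2)‖
      = ‖(x : ℂ) + s * I‖ ^ n / n ! * n ! * Real.exp (-s ^ 2) := by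
        rw [norm_mul, norm_pow, div_mul_cancel₀ _ (by positivity), norm_cexp_neg_sq]
    _ ≤ Real.exp ‖(x : ℂ) + s * I‖ * n ! * Real.exp (-s ^ 2) := by
        gcongr; exact Real.pow_div_factorial_le_exp _ (norm_nonneg _) n
    _ ≤ Real.exp ((1 + (x ^ 2 + s ^ 2)) / 2) * n ! * Real.exp (-s ^ 2) := by
        gcongr; linarith
    _ = n ! * Real.exp ((1 + x ^ 2) / 2) * Real.exp (-(1 / 2) * s ^ 2) := by
        rw [mul_comm (Real.exp _), mul_assoc, mul_assoc, ← Real.exp_add, ← Real.exp_add]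
        ring_nf

lemma hasDerivAt_pow_mul_cexp_neg_sq (n : ℕ) (x s : ℝ) :
    HasDerivAt (fun s : ℝ => ((x : ℂ) + s * I) ^ n * cexp (-(s : ℂ) ^ 2))
      (I * (n * (((x : ℂ) + s * I) ^ (n - 1) * cexp (-(s : ℂ) ^ 2))
        + 2 * (((x : ℂ) + s * I) ^ (n + 1) * cexp (-(s : ℂ) ^ 2))
        - 2 * x * (((x : ℂ) + s * I) ^ n * cexp (-(s : ℂ) ^ 2)))) s := by
  have hz : HasDerivAt (fun s : ℝ => (x : ℂ) + s * I) I s := by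
    simpa using ((hasDerivAt_id s).ofReal_comp.mul_const I).const_add (x : ℂ)
  have hg : HasDerivAt (fun s : ℝ => -(s : ℂ) ^ 2) (-(2 * s)) s := by
    simpa using ((hasDerivAt_id s).ofReal_comp.fun_pow 2).fun_neg
  refine ((hz.fun_pow n).mul hg.cexp).congr_deriv ?_
  linear_combination -2 * (s : ℂ) * ((x : ℂ) + s * I) ^ n * cexp (-(s : ℂ) ^ 2) * I_sq

noncomputable def hermiteIntegral (n : ℕ) (x : ℝ) : ℂ :=
  ∫ s : ℝ, ((x : ℂ) + s * I) ^ n * cexp (-(s : ℂ) ^ 2)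

lemma hermiteIntegral_zero (x : ℝ) : hermiteIntegral 0 x = √Real.pi := by
  have h (s : ℝ) : cexp (-(s : ℂ) ^ 2) = ((Real.exp (-1 * s ^ 2) : ℝ) : ℂ) := by
    push_cast; ring_nf
  simp only [hermiteIntegral, pow_zero, one_mul, h]
  rw [integral_complex_ofReal, integral_gaussian, div_one]

lemma hermiteIntegral_succ (n : ℕ) (x : ℝ) :
    2 * hermiteIntegral (n + 1) x = 2 * x * hermiteIntegral n x - n * hermiteIntegral (n - 1) x := by
  have hA := (integrable_pow_mul_cexp_neg_sq (n - 1) x).const_mul (n : ℂ)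
  have hB := (integrable_pow_mul_cexp_neg_sq (n + 1) x).const_mul (2 : ℂ)
  have hC := (integrable_pow_mul_cexp_neg_sq n x).const_mul (2 * x : ℂ)
  have hAB : Integrable (fun s : ℝ => n * (((x : ℂ) + s * I) ^ (n - 1) * cexp (-(s : ℂ) ^ 2))
      + 2 * (((x : ℂ) + s * I) ^ (n + 1) * cexp (-(s : ℂ) ^ 2))) := hA.add hB
  have h := integral_eq_zero_of_hasDerivAt_of_integrable (hasDerivAt_pow_mul_cexp_neg_sq n x)
    ((hAB.sub hC).const_mul I) (integrable_pow_mul_cexp_neg_sq n x)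
  rw [integral_const_mul, integral_sub hAB hC, integral_add hA hB, integral_const_mul,
    integral_const_mul, integral_const_mul] at h
  simp only [mul_eq_zero, I_ne_zero, false_or] at h
  unfold hermiteIntegral
  linear_combination h

lemma physHermite_eq_hermiteIntegral (n : ℕ) (x : ℝ) :
    (physHermite n x : ℂ) = 2 ^ n / √Real.pi * hermiteIntegral n x := by
  induction n using Nat.strong_induction_on with
  | _ n ih =>
  rcases n with _ | n
  · rw [physHermite_zero, hermiteIntegral_zero, pow_zero, one_div, ofReal_one,
      inv_mul_cancel₀ (ofReal_ne_zero.mpr (Real.sqrt_pos.mpr Real.pi_pos).ne')]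
  · have hpow : (n : ℂ) * 2 ^ (n - 1) * 2 = n * 2 ^ n := by
      rcases n with _ | n
      · simp
      · rw [Nat.add_sub_cancel, pow_succ]; ring
    rw [physHermite_succ]
    push_cast
    rw [ih n (by omega), ih (n - 1) (by omega)]
    linear_combination (-(2 ^ n / √Real.pi : ℂ)) * hermiteIntegral_succ n x
      - (hermiteIntegral (n - 1) x / √Real.pi) * hpow

noncomputable def mehlerIntegrand (t x y : ℝ) (p : ℝ × ℝ) : ℂ :=
  cexp (2 * t * ((x : ℂ) + p.1 * I) * ((y : ℂ) + p.2 * I)) *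
    (cexp (-(p.1 : ℂ) ^ 2) * cexp (-(p.2 : ℂ) ^ 2))

lemma exp_two_mul_norm_mul_norm_le (t x y s u : ℝ) :
    Real.exp (2 * |t| * ‖(x : ℂ) + s * I‖ * ‖(y : ℂ) + u * I‖) *
        (Real.exp (-s ^ 2) * Real.exp (-u ^ 2))
      ≤ Real.exp (|t| * (x ^ 2 + y ^ 2)) *
        (Real.exp (-(1 - |t|) * s ^ 2) * Real.exp (-(1 - |t|) * u ^ 2)) := by
  simp only [← Real.exp_add, Real.exp_le_exp]
  have hamgm := mul_le_mul_of_nonneg_left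
    (two_mul_le_add_sq ‖(x : ℂ) + s * I‖ ‖(y : ℂ) + u * I‖) (abs_nonneg t)
  rw [sq_norm_add_mul_I, sq_norm_add_mul_I] at hamgm
  linarith

lemma integrable_exp_two_mul_norm_mul_norm {t : ℝ} (ht : |t| < 1) (x y : ℝ) :
    Integrable (fun p : ℝ × ℝ => Real.exp (2 * |t| * ‖(x : ℂ) + p.1 * I‖ * ‖(y : ℂ) + p.2 * I‖) *
        (Real.exp (-p.1 ^ 2) * Real.exp (-p.2 ^ 2))) := by
  have hg := integrable_exp_neg_mul_sq (sub_pos.mpr ht)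
  exact ((hg.mul_prod hg).const_mul (Real.exp (|t| * (x ^ 2 + y ^ 2)))).mono' (by fun_prop)
    (ae_of_all _ fun p => by
      rw [Real.norm_of_nonneg (by positivity)]
      exact exp_two_mul_norm_mul_norm_le t x y p.1 p.2)

lemma integrable_mehlerIntegrand {t : ℝ} (ht : |t| < 1) (x y : ℝ) :
    Integrable (mehlerIntegrand t x y) := by
  refine (integrable_exp_two_mul_norm_mul_norm ht x y).mono' (by unfold mehlerIntegrand; fun_prop)
    (ae_of_all _ fun p => ?_)
  rw [mehlerIntegrand, norm_mul, norm_mul, norm_cexp_neg_sq, norm_cexp_neg_sq]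
  gcongr
  refine (norm_exp_le_exp_norm _).trans_eq ?_
  simp [mul_assoc]

lemma hasSum_hermiteIntegral_mul {t : ℝ} (ht : |t| < 1) (x y : ℝ) :
    HasSum (fun n : ℕ => (2 * t : ℂ) ^ n / n ! * (hermiteIntegral n x * hermiteIntegral n y))
      (∫ p : ℝ × ℝ, mehlerIntegrand t x y p) := by
  have hterm (n : ℕ) : (2 * t : ℂ) ^ n / n ! * (hermiteIntegral n x * hermiteIntegral n y) =
      ∫ p : ℝ × ℝ, (2 * t : ℂ) ^ n / n ! *
        (((x : ℂ) + p.1 * I) ^ n * cexp (-(p.1 : ℂ) ^ 2) *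
          (((y : ℂ) + p.2 * I) ^ n * cexp (-(p.2 : ℂ) ^ 2))) := by
    rw [integral_const_mul, Measure.volume_eq_prod,
      integral_prod_mul (fun s : ℝ => ((x : ℂ) + s * I) ^ n * cexp (-(s : ℂ) ^ 2))
        (fun u : ℝ => ((y : ℂ) + u * I) ^ n * cexp (-(u : ℂ) ^ 2))]
    rfl
  have hexp (a : ℝ) : HasSum (fun n : ℕ => a ^ n / n !) (Real.exp a) := by
    rw [Real.exp_eq_exp_ℝ]; exact NormedSpace.expSeries_div_hasSum_exp a
  have hcexp (a : ℂ) : HasSum (fun n : ℕ => a ^ n / n !) (cexp a) := by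
    rw [Complex.exp_eq_exp_ℂ]; exact NormedSpace.expSeries_div_hasSum_exp a
  simp only [hterm]
  refine hasSum_integral_of_dominated_convergence
    (fun n p => (2 * |t| * ‖(x : ℂ) + p.1 * I‖ * ‖(y : ℂ) + p.2 * I‖) ^ n / n ! *
      (Real.exp (-p.1 ^ 2) * Real.exp (-p.2 ^ 2)))
    (fun n => by fun_prop) (fun n => ae_of_all _ fun p => le_of_eq ?_)
    (ae_of_all _ fun p => ((hexp _).mul_right _).summable)
    ((integrable_exp_two_mul_norm_mul_norm ht x y).congr
      (ae_of_all _ fun p => ((hexp _).mul_right _).tsum_eq.symm))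
    (ae_of_all _ fun p => ((hcexp _).mul_right _).congr_fun fun n => by simp only [mul_pow]; ring)
  simp only [norm_mul, norm_div, norm_pow, norm_cexp_neg_sq, norm_natCast, norm_real,
    Real.norm_eq_abs, Complex.norm_two]
  ring

lemma cpow_one_half_ofReal {a : ℝ} (ha : 0 ≤ a) : (a : ℂ) ^ (1 / 2 : ℂ) = (√a : ℂ) := by
  rw [Real.sqrt_eq_rpow, ofReal_cpow ha]
  norm_num

lemma integral_mehlerIntegrand_mk (t x y s : ℝ) :
    ∫ u : ℝ, mehlerIntegrand t x y (s, u) = √Real.pi *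
      cexp ((t ^ 2 - 1) * s ^ 2 + (2 * t * y - 2 * t ^ 2 * x) * I * s
        + (2 * t * x * y - t ^ 2 * x ^ 2)) := by
  have h (u : ℝ) : mehlerIntegrand t x y (s, u) = cexp (-(s : ℂ) ^ 2) *
      cexp (-1 * u ^ 2 + 2 * t * (x + s * I) * I * u + 2 * t * (x + s * I) * y) := by
    rw [mehlerIntegrand, ← Complex.exp_add, ← Complex.exp_add, ← Complex.exp_add]
    ring_nf
  simp only [h]
  rw [integral_const_mul, integral_cexp_quadratic (by simp), neg_neg, div_one,
    cpow_one_half_ofReal Real.pi_pos.le, mul_left_comm, ← Complex.exp_add]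
  congr 2
  linear_combination ((t : ℂ) ^ 2 * (x + s * I) ^ 2 - t ^ 2 * s ^ 2) * I_sq

lemma integral_mehlerIntegrand {t : ℝ} (ht : |t| < 1) (x y : ℝ) :
    ∫ p : ℝ × ℝ, mehlerIntegrand t x y p =
      ((Real.pi / √(1 - t ^ 2) *
        Real.exp ((2 * t * x * y - t ^ 2 * (x ^ 2 + y ^ 2)) / (1 - t ^ 2)) : ℝ) : ℂ) := by
  have ht2 : 0 < 1 - t ^ 2 := sub_pos.mpr ((sq_lt_one_iff_abs_lt_one t).mpr ht)
  rw [Measure.volume_eq_prod, integral_prod _ (integrable_mehlerIntegrand ht x y)]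
  simp only [integral_mehlerIntegrand_mk]
  have hb : ((t : ℂ) ^ 2 - 1).re < 0 := by
    rw [← ofReal_pow, ← ofReal_one, ← ofReal_sub, ofReal_re]
    linarith
  have hsqrt : √Real.pi * √(Real.pi / (1 - t ^ 2)) = Real.pi / √(1 - t ^ 2) := by
    rw [Real.sqrt_div' _ ht2.le, ← mul_div_assoc, Real.mul_self_sqrt Real.pi_pos.le]
  rw [integral_const_mul, integral_cexp_quadratic hb,
    show (Real.pi : ℂ) / -((t : ℂ) ^ 2 - 1) = ((Real.pi / (1 - t ^ 2) : ℝ) : ℂ) by push_cast; ring,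
    cpow_one_half_ofReal (by positivity), ← mul_assoc, ← ofReal_mul, hsqrt, ofReal_mul,
    ofReal_exp]
  congr 2
  have h1 : (1 : ℂ) - t ^ 2 ≠ 0 := by exact_mod_cast ht2.ne'
  have h2 : (t : ℂ) ^ 2 - 1 ≠ 0 := by rw [← neg_sub]; exact neg_ne_zero.mpr h1
  push_cast
  field_simp
  linear_combination -4 * (t : ℂ) ^ 2 * (1 - t ^ 2) * (y - t * x) ^ 2 * I_sq

lemma hermiteFun_mul_hermiteFun (n : ℕ) (x y : ℝ) :
    hermiteFun n x * hermiteFun n y = physHermite n x * physHermite n y *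
      Real.exp (-(x ^ 2 + y ^ 2) / 2) / (2 ^ n * n ! * √Real.pi) := by
  have hc : 0 < (2 : ℝ) ^ n * n ! * √Real.pi := by positivity
  have hsq : ((2 : ℝ) ^ n * n ! * √Real.pi) ^ (-(1 : ℝ) / 2) *
      ((2 : ℝ) ^ n * n ! * √Real.pi) ^ (-(1 : ℝ) / 2) = ((2 : ℝ) ^ n * n ! * √Real.pi)⁻¹ := by
    rw [← Real.rpow_add hc, ← Real.rpow_neg_one]
    norm_num
  rw [hermiteFun, hermiteFun, div_eq_mul_inv (_ * _ * Real.exp _), ← hsq, show -(x ^ 2 + y ^ 2) / 2 =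
    -x ^ 2 / 2 + -y ^ 2 / 2 by ring, Real.exp_add]
  ring

lemma ofReal_pow_mul_hermiteFun_mul_hermiteFun (n : ℕ) (t x y : ℝ) :
    ((t ^ n * hermiteFun n x * hermiteFun n y : ℝ) : ℂ) =
      ((Real.exp (-(x ^ 2 + y ^ 2) / 2) / (Real.pi * √Real.pi) : ℝ) : ℂ) *
        ((2 * t : ℂ) ^ n / n ! * (hermiteIntegral n x * hermiteIntegral n y)) := by
  have hsq : (√Real.pi : ℂ) * √Real.pi = Real.pi := by
    rw [← ofReal_mul, Real.mul_self_sqrt Real.pi_pos.le]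
  rw [mul_assoc, hermiteFun_mul_hermiteFun]
  push_cast
  rw [physHermite_eq_hermiteIntegral, physHermite_eq_hermiteIntegral, ← hsq]
  field_simp
  ring

/-- Mehler's formula: `Σ_n t^n Ψ_n(x) Ψ_n(y)
  = (π(1-t²))^{-1/2} exp((4xyt - (x²+y²)(1+t²))/(2(1-t²)))` for `|t| < 1`. -/
theorem mehler_formula (x y t : ℝ) (ht : |t| < 1) :
    ∑' n : ℕ, t ^ n * hermiteFun n x * hermiteFun n y
      = (Real.pi * (1 - t ^ 2)) ^ (-(1 : ℝ) / 2) *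
        Real.exp ((4 * x * y * t - (x ^ 2 + y ^ 2) * (1 + t ^ 2)) / (2 * (1 - t ^ 2))) := by
  have ht2 : 0 < 1 - t ^ 2 := sub_pos.mpr ((sq_lt_one_iff_abs_lt_one t).mpr ht)
  have hsum := ((hasSum_hermiteIntegral_mul ht x y).mul_left
    ((Real.exp (-(x ^ 2 + y ^ 2) / 2) / (Real.pi * √Real.pi) : ℝ) : ℂ)).congr_fun
      fun n => ofReal_pow_mul_hermiteFun_mul_hermiteFun n t x y
  rw [integral_mehlerIntegrand ht, ← ofReal_mul] at hsum
  have hpow : (Real.pi * (1 - t ^ 2)) ^ (-(1 : ℝ) / 2) = (√Real.pi * √(1 - t ^ 2))⁻¹ := by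
    rw [← Real.sqrt_mul Real.pi_pos.le, Real.sqrt_eq_rpow, ← Real.rpow_neg (by positivity)]
    norm_num
  have hexp : (4 * x * y * t - (x ^ 2 + y ^ 2) * (1 + t ^ 2)) / (2 * (1 - t ^ 2)) =
      -(x ^ 2 + y ^ 2) / 2 + (2 * t * x * y - t ^ 2 * (x ^ 2 + y ^ 2)) / (1 - t ^ 2) := by
    field_simp
    ring
  rw [(hasSum_ofReal.mp hsum).tsum_eq, hpow, hexp, Real.exp_add]
  field_simp
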